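/- arXiv:1801.04483 — 3 statements merged into one kernel-verified Lean document; each statement's English description precedes it below -/
import Mathlib

section
/- Let b ≥ 2 and k ≥ 1 be integers and let E_k = gcd((b^k − 1)/(b − 1), k). Then E_k divides c_k^b(ℓ) for every integer ℓ ≥ 1. -/
/-!
Fix a prime power `p ^ a` dividing `gcd (c_k^b(1)) k`. If `p ∤ b^ℓ - 1`, then `p ^ a` divides
`c_k^b(1) ∣ b^k - 1 ∣ b^(kℓ) - 1 = c_k^b(ℓ) * (b^ℓ - 1)` and is coprime to the second factor.
If `p ∣ b^ℓ - 1`, put `x = b^ℓ ≡ 1 (mod p)`; since `p ^ a ∣ k`, induction on `a` using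
`1 + x + ⋯ + x^(pm-1) = (1 + x + ⋯ + x^(p-1)) * (1 + x^p + ⋯ + x^(p(m-1)))`, whose first factor
is `≡ p ≡ 0 (mod p)`, gives `p ^ a ∣ c_k^b(ℓ)`.
-/

/-- `ckb b k n = 1 + b^n + b^(2n) + ⋯ + b^((k-1)n)`, i.e., `(b^(kn) - 1)/(b^n - 1)` for `n ≥ 1`. -/
def ckb (b k n : ℕ) : ℕ := ∑ i ∈ Finset.range k, b ^ (i * n)

open Finset

theorem geom_sum_range_mul {R : Type*} [Semiring R] (x : R) (m n : ℕ) :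
    ∑ i ∈ range (m * n), x ^ i = (∑ i ∈ range m, x ^ i) * ∑ j ∈ range n, (x ^ m) ^ j := by
  induction n with
  | zero => simp
  | succ n ih =>
    rw [Nat.mul_succ, sum_range_add, ih, sum_range_succ, mul_add, sum_mul (range m) _ ((x ^ m) ^ n)]
    refine congrArg _ (sum_congr rfl fun j _ ↦ ?_)
    rw [← pow_mul, ← pow_add, add_comm]

theorem dvd_geom_sum_of_dvd_sub_one {R : Type*} [CommRing R] {p : ℕ} {x : R}
    (hx : (p : R) ∣ x - 1) : (p : R) ∣ ∑ i ∈ range p, x ^ i := by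
  have hsplit : ∑ i ∈ range p, x ^ i = ∑ i ∈ range p, (x ^ i - 1) + p := by
    simp [sum_sub_distrib]
  rw [hsplit]
  exact dvd_add (dvd_sum fun i _ ↦ hx.trans (sub_one_dvd_pow_sub_one x i)) dvd_rfl

theorem pow_dvd_geom_sum_of_dvd_sub_one {R : Type*} [CommRing R] {p : ℕ} {x : R}
    (hx : (p : R) ∣ x - 1) {n k : ℕ} (hk : p ^ n ∣ k) : (p : R) ^ n ∣ ∑ i ∈ range k, x ^ i := by
  induction n generalizing x k with
  | zero => simp
  | succ n ih =>
    obtain ⟨c, rfl⟩ := hk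
    rw [pow_succ' (p : R), pow_succ' p, mul_assoc, geom_sum_range_mul]
    exact mul_dvd_mul (dvd_geom_sum_of_dvd_sub_one hx)
      (ih (hx.trans (sub_one_dvd_pow_sub_one x p)) (dvd_mul_right _ _))

theorem natCast_ckb (b k n : ℕ) : (ckb b k n : ℤ) = ∑ i ∈ range k, ((b : ℤ) ^ n) ^ i := by
  simp only [ckb, Nat.cast_sum, Nat.cast_pow, ← pow_mul, mul_comm]

theorem ckb_one (b k : ℕ) (hb : 2 ≤ b) : ckb b k 1 = (b ^ k - 1) / (b - 1) := by
  simpa [ckb] using Nat.geomSum_eq hb k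

theorem gcd_ckb_one_dvd_ckb (b k ℓ : ℕ) : Nat.gcd (ckb b k 1) k ∣ ckb b k ℓ := by
  refine (Nat.dvd_iff_prime_pow_dvd_dvd _ _).2 fun p a hp hpa ↦ ?_
  have hpk : p ^ a ∣ k := hpa.trans (Nat.gcd_dvd_right _ _)
  have hpc : (p : ℤ) ^ a ∣ ∑ i ∈ range k, (b : ℤ) ^ i := by
    simpa [natCast_ckb] using Int.natCast_dvd_natCast.2 (hpa.trans (Nat.gcd_dvd_left _ _))
  rw [← Int.natCast_dvd_natCast, Nat.cast_pow, natCast_ckb]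
  by_cases hpb : (p : ℤ) ∣ (b : ℤ) ^ ℓ - 1
  · exact pow_dvd_geom_sum_of_dvd_sub_one hpb hpk
  · have hcop : IsCoprime ((p : ℤ) ^ a) ((b : ℤ) ^ ℓ - 1) :=
      ((Nat.prime_iff_prime_int.1 hp).coprime_iff_not_dvd.2 hpb).pow_left
    have hdvd : (p : ℤ) ^ a ∣ (∑ i ∈ range k, ((b : ℤ) ^ ℓ) ^ i) * ((b : ℤ) ^ ℓ - 1) :=
      calc (p : ℤ) ^ a ∣ (b : ℤ) ^ k - 1 := hpc.trans (Dvd.intro _ (geom_sum_mul _ _))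
        _ ∣ ((b : ℤ) ^ ℓ) ^ k - 1 := by
          rw [← pow_mul]
          exact dvd_pow_sub_one_of_dvd (dvd_mul_left k ℓ)
        _ = _ := (geom_sum_mul _ _).symm
    exact hcop.dvd_of_dvd_mul_right hdvd

theorem Ek_dvd_ckb_general (b k : ℕ) (hb : 2 ≤ b) (ℓ : ℕ) :
    Nat.gcd ((b ^ k - 1) / (b - 1)) k ∣ ckb b k ℓ :=
  ckb_one b k hb ▸ gcd_ckb_one_dvd_ckb b k ℓ

/-- For `b ≥ 2`, `k ≥ 1`, the number `E_k = gcd((b^k - 1)/(b - 1), k)` divides `c_k^b(ℓ)`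
for every `ℓ ≥ 1`. -/
theorem Ek_dvd_ckb (b k : ℕ) (hb : 2 ≤ b) (hk : 1 ≤ k) (ℓ : ℕ) (hℓ : 1 ≤ ℓ) :
    Nat.gcd ((b ^ k - 1) / (b - 1)) k ∣ ckb b k ℓ :=
  Ek_dvd_ckb_general b k hb ℓ
end

section
/- Let k ≥ 2 be an integer and let g = 2^ℓ·f where ℓ ≥ 0 and f ≥ 1 is odd. Then for every integer n ≥ kf + ℓ + log₂ f, there exist a natural number s that is the sum of at most 2^{kf−1} binary k'th powers and an integer t with 0 ≤ t ≤ 2^{kf−1} such that ⌊2^n/g⌋ = s + t. -/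
/-!
Let `φ = φ(f)`, so that `f ∣ 2^N - 1` whenever `φ ∣ N`. Write `n - ℓ = kN + e` with `φ ∣ N`.
Since `2^(kN) - 1 = (2^N - 1) · c_k(N)`, we get `⌊2^(kN+e)/f⌋ = D · c_k(N) + ⌊2^e/f⌋` with
`D = 2^e (2^N - 1)/f`. The residue of `n - ℓ` modulo `kφ` lets us place `e` in a window of
`kφ` consecutive exponents where `f ≤ 2^e ≤ f · 2^(kf-1)`; then `⌊2^e/f⌋ ≤ 2^(kf-1)` and
`2^(N-1) ≤ D ≤ 2^(kf-1) (2^N - 1)`, so `D` is a sum of at most `2^(kf-1)` numbers `a` with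
`2^(N-1) ≤ a < 2^N`, and each `a · c_k(N)` is a binary `k`'th power.
-/

/-- `ck k n = 1 + 2^n + 2^(2n) + ⋯ + 2^((k-1)n)`. -/
def ck (k n : ℕ) : ℕ := ∑ i ∈ Finset.range k, 2 ^ (i * n)

/-- `m` is a binary `k`'th power: `m = a * ck k n` for some `n ≥ 1` and `2^(n-1) ≤ a < 2^n`. -/
def IsBinaryKthPower (k m : ℕ) : Prop :=
  ∃ n a : ℕ, 1 ≤ n ∧ 2 ^ (n - 1) ≤ a ∧ a < 2 ^ n ∧ m = a * ck k n

open Finset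
open scoped Nat

lemma ck_eq_sum_pow (k N : ℕ) : ck k N = ∑ i ∈ range k, (2 ^ N) ^ i := by
  simp only [ck, ← pow_mul, mul_comm]

lemma ck_mul_two_pow_sub_one_add_one (k N : ℕ) : ck k N * (2 ^ N - 1) + 1 = 2 ^ (k * N) := by
  have h := geom_sum_mul_add (2 ^ N - 1) k
  rw [Nat.sub_add_cancel Nat.one_le_two_pow] at h
  rw [ck_eq_sum_pow, h, ← pow_mul, mul_comm]

lemma exists_multiset_Icc_sum_eq {L M : ℕ} (hLM : 2 * L ≤ M + 1) :
    ∀ {J D : ℕ}, L ≤ D → D ≤ J * M →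
      ∃ l : Multiset ℕ, l.card ≤ J ∧ (∀ x ∈ l, x ∈ Set.Icc L M) ∧ l.sum = D
  | 0, D, _, hDM => ⟨0, by simp, by simp, by simp at hDM; simp [hDM]⟩
  | J + 1, D, hLD, hDM => by
    by_cases hD : D ≤ M
    · exact ⟨{D}, by simp, by simp [hLD, hD], by simp⟩
    by_cases hLD' : L ≤ D - M
    · obtain ⟨l, hcard, hmem, hsum⟩ :=
        exists_multiset_Icc_sum_eq hLM (J := J) hLD' (by rw [add_one_mul] at hDM; omega)
      refine ⟨M ::ₘ l, by simpa using hcard, ?_, by simp [hsum]; omega⟩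
      simp only [Multiset.mem_cons, forall_eq_or_imp]
      exact ⟨⟨by omega, le_rfl⟩, hmem⟩
    · have hJ : 1 ≤ J := Nat.one_le_iff_ne_zero.2 (by rintro rfl; omega)
      -- `M < D < M + L`, and `2 * L ≤ M + 1` puts `D - L` in `[L, M]`.
      refine ⟨{L, D - L}, by simpa using hJ, ?_, by simp; omega⟩
      simp only [Multiset.insert_eq_cons, Multiset.mem_cons, Multiset.mem_singleton,
        forall_eq_or_imp, forall_eq, Set.mem_Icc]
      omega

lemma isBinaryKthPower_mul_ck {k N a : ℕ} (hN : 1 ≤ N)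
    (ha : a ∈ Set.Icc (2 ^ (N - 1)) (2 ^ N - 1)) :
    IsBinaryKthPower k (a * ck k N) :=
  ⟨N, a, hN, ha.1, Nat.lt_of_le_sub_one (Nat.two_pow_pos N) ha.2, rfl⟩

lemma exists_binaryKthPower_sum_eq_mul_ck {k N J D : ℕ} (hN : 1 ≤ N) (hlo : 2 ^ (N - 1) ≤ D)
    (hhi : D ≤ J * (2 ^ N - 1)) :
    ∃ l : Multiset ℕ, l.card ≤ J ∧ (∀ x ∈ l, IsBinaryKthPower k x) ∧
      l.sum = D * ck k N := by
  have hLM : 2 * 2 ^ (N - 1) ≤ 2 ^ N - 1 + 1 := by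
    rw [← pow_succ', Nat.sub_add_cancel hN, Nat.sub_add_cancel Nat.one_le_two_pow]
  obtain ⟨l, hcard, hmem, hsum⟩ := exists_multiset_Icc_sum_eq hLM hlo hhi
  refine ⟨l.map (· * ck k N), by simpa using hcard, ?_, ?_⟩
  · simp only [Multiset.mem_map]
    rintro _ ⟨a, ha, rfl⟩
    exact isBinaryKthPower_mul_ck hN (hmem a ha)
  · rw [Multiset.sum_map_mul_right, Multiset.map_id', hsum]

lemma pow_div_eq_binaryKthPower_sum_add {k N e f J : ℕ} (hN : 1 ≤ N) (hfN : f ∣ 2 ^ N - 1)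
    (hfe : f ≤ 2 ^ e) (heJ : 2 ^ e ≤ f * J) :
    ∃ s t : ℕ,
      (∃ l : Multiset ℕ, l.card ≤ J ∧ (∀ x ∈ l, IsBinaryKthPower k x) ∧ l.sum = s) ∧
      t ≤ J ∧ 2 ^ (k * N + e) / f = s + t := by
  obtain ⟨u, hu⟩ := hfN
  have h1N : 1 ≤ 2 ^ N - 1 := Nat.le_sub_one_of_lt (Nat.one_lt_two_pow (by omega))
  have hf : 0 < f := Nat.pos_of_ne_zero (by rintro rfl; omega)
  have hfD : f * (2 ^ e * u) = 2 ^ e * (2 ^ N - 1) := by rw [hu]; ring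
  have hpow : 2 ^ (k * N + e) = f * (2 ^ e * u * ck k N) + 2 ^ e := by
    rw [pow_add, ← ck_mul_two_pow_sub_one_add_one k N, hu]; ring
  have hlo : 2 ^ (N - 1) ≤ 2 ^ e * u := by
    refine Nat.le_of_mul_le_mul_left ?_ hf
    calc f * 2 ^ (N - 1) ≤ 2 ^ e * 2 ^ (N - 1) := Nat.mul_le_mul_right _ hfe
      _ ≤ 2 ^ e * (2 ^ N - 1) := Nat.mul_le_mul_left _ (Nat.le_sub_one_of_lt
          (Nat.pow_lt_pow_right one_lt_two (by omega)))
      _ = f * (2 ^ e * u) := hfD.symm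
  have hhi : 2 ^ e * u ≤ J * (2 ^ N - 1) := by
    refine Nat.le_of_mul_le_mul_left ?_ hf
    calc f * (2 ^ e * u) = 2 ^ e * (2 ^ N - 1) := hfD
      _ ≤ f * J * (2 ^ N - 1) := Nat.mul_le_mul_right _ heJ
      _ = f * (J * (2 ^ N - 1)) := mul_assoc _ _ _
  obtain ⟨l, hcard, hmem, hsum⟩ := exists_binaryKthPower_sum_eq_mul_ck (k := k) hN hlo hhi
  refine ⟨_, 2 ^ e / f, ⟨l, hcard, hmem, hsum⟩, Nat.div_le_of_le_mul heJ, ?_⟩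
  rw [hpow, Nat.mul_add_div hf]

lemma two_pow_clog_add_mul_totient_sub_one_le (k : ℕ) {f : ℕ} (hf : 0 < f) :
    2 ^ (Nat.clog 2 f + k * φ f - 1) ≤ f * 2 ^ (k * f - 1) := by
  rcases (Nat.one_le_iff_ne_zero.2 hf.ne').eq_or_lt with rfl | hf1
  · simp
  have hc : 1 ≤ Nat.clog 2 f := Nat.clog_pos one_lt_two hf1
  have hkφ : k * φ f ≤ k * f - 1 := by
    have := Nat.mul_le_mul_left k (Nat.totient_lt f hf1)
    rcases k.eq_zero_or_pos with rfl | hk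
    · simp
    · rw [Nat.succ_eq_add_one, mul_add, mul_one] at this; omega
  calc 2 ^ (Nat.clog 2 f + k * φ f - 1) = 2 ^ (Nat.clog 2 f - 1) * 2 ^ (k * φ f) := by
        rw [← pow_add]; congr 1; omega
    _ ≤ f * 2 ^ (k * f - 1) := Nat.mul_le_mul (Nat.pow_pred_clog_lt_self one_lt_two hf1).le
        (Nat.pow_le_pow_right two_pos hkφ)

lemma exists_dvd_two_pow_sub_one_mul_add_eq {k f m : ℕ} (hk : 1 ≤ k) (hodd : Odd f)
    (hm : Nat.clog 2 f + k * f ≤ m) :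
    ∃ N e, 1 ≤ N ∧ f ∣ 2 ^ N - 1 ∧ f ≤ 2 ^ e ∧ 2 ^ e ≤ f * 2 ^ (k * f - 1) ∧
      k * N + e = m := by
  set c := Nat.clog 2 f
  have hφ : 0 < φ f := Nat.totient_pos.2 hodd.pos
  have hP : 0 < k * φ f := Nat.mul_pos hk hφ
  have hPf : k * φ f ≤ k * f := Nat.mul_le_mul_left _ (Nat.totient_le f)
  have hq : 1 ≤ (m - c) / (k * φ f) := (Nat.le_div_iff_mul_le hP).2 (by omega)
  have hr : (m - c) % (k * φ f) < k * φ f := Nat.mod_lt _ hP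
  refine ⟨φ f * ((m - c) / (k * φ f)), c + (m - c) % (k * φ f), Nat.mul_le_mul hφ hq,
    ?_, ?_, ?_, ?_⟩
  · have h := ((Nat.ModEq.pow_totient (Nat.coprime_two_left.2 hodd)).pow ((m - c) / (k * φ f)))
    rw [one_pow, ← pow_mul] at h
    exact (Nat.modEq_iff_dvd' Nat.one_le_two_pow).1 h.symm
  · exact (Nat.le_pow_clog one_lt_two f).trans (Nat.pow_le_pow_right two_pos (by omega))
  · exact (Nat.pow_le_pow_right two_pos (by omega)).trans
      (two_pow_clog_add_mul_totient_sub_one_le k hodd.pos)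
  · have := Nat.div_add_mod (m - c) (k * φ f)
    rw [← mul_assoc]; omega

lemma clog_add_le_of_add_logb_le {a f n : ℕ} (h : (a : ℝ) + Real.logb 2 f ≤ n) :
    Nat.clog 2 f + a ≤ n := by
  have h0 : 0 ≤ Real.logb 2 (f : ℝ) := by
    rcases f.eq_zero_or_pos with rfl | hf
    · simp
    · exact Real.logb_nonneg one_lt_two (by exact_mod_cast hf)
  rw [← Real.natCeil_logb_natCast, Nat.cast_ofNat, ← Nat.ceil_add_natCast h0, Nat.ceil_le]
  linarith

theorem floor_pow_div_sum_binary_kth_powers_general (k ℓ f g : ℕ) (hk : 2 ≤ k)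
    (hodd : Odd f) (hg : g = 2 ^ ℓ * f) (n : ℕ)
    (hn : (k * f + ℓ : ℝ) + Real.logb 2 f ≤ (n : ℝ)) :
    ∃ s t : ℕ,
      (∃ l : Multiset ℕ, l.card ≤ 2 ^ (k * f - 1) ∧
        (∀ x ∈ l, IsBinaryKthPower k x) ∧ l.sum = s) ∧
      t ≤ 2 ^ (k * f - 1) ∧ 2 ^ n / g = s + t := by
  have hlog : Nat.clog 2 f + (k * f + ℓ) ≤ n :=
    clog_add_le_of_add_logb_le (by exact_mod_cast hn)
  obtain ⟨N, e, hN, hfN, hfe, heJ, hm⟩ :=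
    exists_dvd_two_pow_sub_one_mul_add_eq (k := k) (m := n - ℓ) (by omega) hodd (by omega)
  have hdiv : 2 ^ n / g = 2 ^ (k * N + e) / f := by
    rw [hg, ← Nat.div_div_eq_div_mul, Nat.pow_div (show ℓ ≤ n by omega) two_pos, hm]
  rw [hdiv]
  exact pow_div_eq_binaryKthPower_sum_add hN hfN hfe heJ

/-- Let `k ≥ 2` and `g = 2^ℓ·f` with `f ≥ 1` odd. For every `n ≥ kf + ℓ + log₂ f`,
`⌊2^n/g⌋ = s + t` where `s` is a sum of at most `2^(kf-1)` binary `k`'th powers and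
`0 ≤ t ≤ 2^(kf-1)`. -/
theorem floor_pow_div_sum_binary_kth_powers (k ℓ f g : ℕ) (hk : 2 ≤ k) (hf : 1 ≤ f)
    (hodd : Odd f) (hg : g = 2 ^ ℓ * f) (n : ℕ)
    (hn : (k * f + ℓ : ℝ) + Real.logb 2 f ≤ (n : ℝ)) :
    ∃ s t : ℕ,
      (∃ l : Multiset ℕ, l.card ≤ 2 ^ (k * f - 1) ∧
        (∀ x ∈ l, IsBinaryKthPower k x) ∧ l.sum = s) ∧
      t ≤ 2 ^ (k * f - 1) ∧ 2 ^ n / g = s + t :=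
  floor_pow_div_sum_binary_kth_powers_general k ℓ f g hk hodd hg n hn
end

section
/- Let k ≥ 2 be an integer and let E_k = gcd(2^k − 1, k). Every integer N > 2^{k² + k} can be written as a finite sum of elements of the set E_k^{−1}·S_k = { s/E_k : s ∈ S_k }; equivalently, the Frobenius number F_k of E_k^{−1}·S_k satisfies F_k ≤ 2^{k² + k}. -/
/-!
Two kinds of binary `k`'th powers suffice: `2^k - 1 = 1 · c_k(1)` and `a · c_k(k)` with
`2^(k-1) ≤ a < 2^k`. Every `x ≥ 2^(k-1)` is a sum of numbers in `[2^(k-1), 2^k)`, so after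
division by `E_k` we can write `N = d_k x + d_1 m` with `d_1 = (2^k - 1)/E_k`,
`d_k = c_k(k)/E_k`, as soon as `d_k x ≡ N` mod `d_1` has a solution
`x ∈ [2^(k-1), 2^(k-1) + d_1)` with `d_k x ≤ N`. The
congruence is solvable because `c_k(k) ≡ k` mod `2^k - 1` makes `d_1` and `d_k` coprime, and
`d_k x ≤ N` follows from `2 c_k(k) < 2^(k²)`.
-/

lemma ck_mul_two_pow_sub_one (k n : ℕ) : ck k n * (2 ^ n - 1) = 2 ^ (k * n) - 1 := by
  simpa only [ck, ← pow_mul, mul_comm] using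
    geom_sum_mul_of_one_le (Nat.one_le_two_pow (n := n)) k

lemma ck_one (k : ℕ) : ck k 1 = 2 ^ k - 1 := by
  simpa using ck_mul_two_pow_sub_one k 1

lemma two_mul_ck_lt {k n : ℕ} (hn : 2 ≤ n) : 2 * ck k n < 2 ^ (k * n) := by
  have h4 : 4 ≤ 2 ^ n := Nat.pow_le_pow_right two_pos hn
  have hmul : 2 * ck k n ≤ ck k n * (2 ^ n - 1) := by
    rw [mul_comm]
    exact Nat.mul_le_mul_left _ (by omega)
  have := ck_mul_two_pow_sub_one k n
  have := Nat.one_le_two_pow (n := k * n)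
  omega

lemma ck_modEq (k n : ℕ) : ck k n ≡ k [MOD 2 ^ n - 1] := by
  have h : 2 ^ n ≡ 1 [MOD 2 ^ n - 1] :=
    ((Nat.modEq_iff_dvd' Nat.one_le_two_pow).mpr dvd_rfl).symm
  simpa [ck, pow_mul'] using Nat.ModEq.sum (s := Finset.range k) fun i _ => h.pow i

lemma gcd_two_pow_sub_one_ck (k : ℕ) :
    Nat.gcd (2 ^ k - 1) (ck k k) = Nat.gcd (2 ^ k - 1) k := by
  rw [Nat.gcd_rec, ck_modEq, ← Nat.gcd_rec]

lemma coprime_ck_div_two_pow_sub_one_div {k : ℕ} (hk : 0 < k) :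
    (ck k k / Nat.gcd (2 ^ k - 1) k).Coprime ((2 ^ k - 1) / Nat.gcd (2 ^ k - 1) k) := by
  have hpos : 0 < Nat.gcd (2 ^ k - 1) (ck k k) :=
    gcd_two_pow_sub_one_ck k ▸ Nat.gcd_pos_of_pos_right _ hk
  exact (gcd_two_pow_sub_one_ck k ▸ Nat.coprime_div_gcd_div_gcd hpos).symm

lemma ck_self_div_mul_lt {k : ℕ} (hk : 2 ≤ k) (E : ℕ) :
    ck k k / E * (2 ^ (k - 1) + (2 ^ k - 1) / E) < 2 ^ (k ^ 2 + k) := by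
  have hsum : 2 ^ (k - 1) + (2 ^ k - 1) ≤ 2 * 2 ^ k := by
    have := Nat.two_pow_pred_lt_two_pow (w := k) (by omega)
    omega
  calc ck k k / E * (2 ^ (k - 1) + (2 ^ k - 1) / E)
      ≤ ck k k * (2 * 2 ^ k) := by
        gcongr
        · exact Nat.div_le_self _ _
        · exact (Nat.add_le_add_left (Nat.div_le_self _ _) _).trans hsum
    _ = 2 * ck k k * 2 ^ k := by ring
    _ < 2 ^ (k * k) * 2 ^ k := Nat.mul_lt_mul_of_pos_right (two_mul_ck_lt hk) (by positivity)
    _ = 2 ^ (k ^ 2 + k) := by rw [← pow_add, sq]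

lemma exists_mem_Ico_mul_modEq {a b : ℕ} (hab : a.Coprime b) (hb : 0 < b) (L N : ℕ) :
    ∃ x, L ≤ x ∧ x < L + b ∧ a * x ≡ N [MOD b] := by
  have : NeZero b := ⟨hb.ne'⟩
  set u := ZMod.unitOfCoprime a hab
  refine ⟨L + ((N : ZMod b) * ↑u⁻¹ - L).val, by omega, by simpa using ZMod.val_lt _, ?_⟩
  rw [← ZMod.natCast_eq_natCast_iff]
  have ha : (a : ZMod b) = u := (ZMod.coe_unitOfCoprime a hab).symm
  push_cast [ZMod.natCast_val, ZMod.cast_id', ha]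
  simp [mul_left_comm]

namespace AddSubmonoid

lemma mem_of_forall_mem_Ico (S : AddSubmonoid ℕ) {m : ℕ} (hm : 0 < m)
    (h : ∀ a, m ≤ a → a < 2 * m → a ∈ S) (x : ℕ) (hx : m ≤ x) : x ∈ S := by
  induction x using Nat.strong_induction_on with
  | _ x ih =>
    by_cases hlt : x < 2 * m
    · exact h x hx hlt
    · rw [← Nat.add_sub_of_le hx]
      exact S.add_mem (h m le_rfl (by omega)) (ih (x - m) (by omega) (by omega))

lemma mem_of_coprime_of_le (S : AddSubmonoid ℕ) {a b L N : ℕ} (hab : a.Coprime b)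
    (hb : 0 < b) (ha : ∀ x, L ≤ x → a * x ∈ S) (hbS : b ∈ S) (hN : a * (L + b) ≤ N) :
    N ∈ S := by
  obtain ⟨x, hLx, hxb, hmod⟩ := exists_mem_Ico_mul_modEq hab hb L N
  have hle : a * x ≤ N := (Nat.mul_le_mul_left a hxb.le).trans hN
  obtain ⟨m, hm⟩ := (Nat.modEq_iff_dvd' hle).mp hmod
  rw [← Nat.add_sub_cancel' hle, hm]
  exact S.add_mem (ha x hLx) (by simpa [mul_comm] using S.nsmul_mem hbS m)

end AddSubmonoid

/-- For `k ≥ 2` and `E_k = gcd(2^k - 1, k)`, every integer `N > 2^(k² + k)` is a finite sum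
of elements of `E_k⁻¹·S_k = {s / E_k : s ∈ S_k}`; i.e., the Frobenius number of
`E_k⁻¹·S_k` is at most `2^(k² + k)`. -/
theorem frobenius_bound (k : ℕ) (hk : 2 ≤ k) (N : ℕ) (hN : 2 ^ (k ^ 2 + k) < N) :
    ∃ l : Multiset ℕ,
      (∀ x ∈ l, ∃ s : ℕ, IsBinaryKthPower k s ∧ x = s / Nat.gcd (2 ^ k - 1) k) ∧
      l.sum = N := by
  have hEc : Nat.gcd (2 ^ k - 1) k ∣ ck k k := gcd_two_pow_sub_one_ck k ▸ Nat.gcd_dvd_right _ _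
  set E := Nat.gcd (2 ^ k - 1) k
  set S := AddSubmonoid.closure {x | ∃ s, IsBinaryKthPower k s ∧ x = s / E}
  suffices N ∈ S from AddSubmonoid.exists_multiset_of_mem_closure this
  have hd₁ : (2 ^ k - 1) / E ∈ S := AddSubmonoid.subset_closure
    ⟨2 ^ k - 1, ⟨1, 1, le_rfl, le_rfl, by norm_num, by rw [ck_one, one_mul]⟩, rfl⟩
  have hdk : ∀ x, 2 ^ (k - 1) ≤ x → ck k k / E * x ∈ S := by
    refine (S.comap (AddMonoidHom.mulLeft (ck k k / E))).mem_of_forall_mem_Ico (by positivity) ?_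
    intro a ha₁ ha₂
    have hlt : a < 2 ^ k := by rwa [mul_comm, Nat.two_pow_pred_mul_two (by omega)] at ha₂
    refine AddSubmonoid.subset_closure ⟨a * ck k k, ⟨k, a, by omega, ha₁, hlt, rfl⟩, ?_⟩
    simp [Nat.mul_div_assoc a hEc, mul_comm]
  have hd₁_pos : 0 < (2 ^ k - 1) / E :=
    Nat.div_pos (Nat.gcd_le_left _ (Nat.sub_pos_of_lt (Nat.one_lt_two_pow (by omega))))
      (Nat.gcd_pos_of_pos_right _ (by omega))
  exact S.mem_of_coprime_of_le (coprime_ck_div_two_pow_sub_one_div (by omega)) hd₁_pos hdk hd₁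
    (ck_self_div_mul_lt hk E |>.trans hN).le
end
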